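/- arXiv:1108.2363 — 6 statements merged into one kernel-verified Lean document; each statement's English description precedes it below -/
import Mathlib

section
/- Let σ : [a,b] → ℝ⁵ be a C¹ curve with ⟨σ(t),σ(t)⟩ = 1 and ⟨σ'(t),σ'(t)⟩ < 0 for all t (a time-like path in Λ⁴). Then for all t₁ < t₂ in [a,b] and every nonzero light-like vector v ∈ ℝ⁵ (⟨v,v⟩ = 0, v ≠ 0) one has ⟨σ(t₂) − σ(t₁), v⟩ ≠ 0. In particular, there is no nonzero light-like vector v with ⟨v,σ(t₁)⟩ = 0 and ⟨v,σ(t₂)⟩ = 0; that is, the 2-spheres of S³ corresponding to σ(t₁) and σ(t₂) are disjoint. -/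
/-- The Lorentz bilinear form of signature (4,1) on ℝ⁵. -/
noncomputable def lorentz (x y : Fin 5 → ℝ) : ℝ :=
  x 0 * y 0 + x 1 * y 1 + x 2 * y 2 + x 3 * y 3 - x 4 * y 4

/-- A light-like vector orthogonal to a time-like vector is zero. -/
lemma lightlike_orth_timelike_eq_zero (w v : Fin 5 → ℝ)
    (hw : lorentz w w < 0) (hv : lorentz v v = 0) (ho : lorentz w v = 0) :
    v = 0 := by
  unfold lorentz at hw hv ho
  have ho' : w 4 * v 4 = w 0 * v 0 + w 1 * v 1 + w 2 * v 2 + w 3 * v 3 := by linarith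
  have hv' : v 4 * v 4 = v 0 * v 0 + v 1 * v 1 + v 2 * v 2 + v 3 * v 3 := by linarith
  have cs : (w 0 * v 0 + w 1 * v 1 + w 2 * v 2 + w 3 * v 3) ^ 2 ≤
      (w 0 * w 0 + w 1 * w 1 + w 2 * w 2 + w 3 * w 3) *
        (v 0 * v 0 + v 1 * v 1 + v 2 * v 2 + v 3 * v 3) := by
    nlinarith [sq_nonneg (w 0 * v 1 - w 1 * v 0), sq_nonneg (w 0 * v 2 - w 2 * v 0),
      sq_nonneg (w 0 * v 3 - w 3 * v 0), sq_nonneg (w 1 * v 2 - w 2 * v 1),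
      sq_nonneg (w 1 * v 3 - w 3 * v 1), sq_nonneg (w 2 * v 3 - w 3 * v 2)]
  have hkey : (w 4 * v 4) ^ 2 ≤
      (w 0 * w 0 + w 1 * w 1 + w 2 * w 2 + w 3 * w 3) * (v 4 * v 4) := by
    rw [ho', hv']; exact cs
  have h40 : v 4 = 0 := by
    by_contra hne
    have hp : 0 < v 4 * v 4 := mul_self_pos.mpr hne
    nlinarith [hkey, mul_lt_mul_of_pos_right hw hp]
  have hs : v 0 * v 0 + v 1 * v 1 + v 2 * v 2 + v 3 * v 3 = 0 := by
    rw [h40] at hv'; linarith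
  have n0 := mul_self_nonneg (v 0)
  have n1 := mul_self_nonneg (v 1)
  have n2 := mul_self_nonneg (v 2)
  have n3 := mul_self_nonneg (v 3)
  have h0 : v 0 = 0 := mul_self_eq_zero.mp (by linarith)
  have h1 : v 1 = 0 := mul_self_eq_zero.mp (by linarith)
  have h2 : v 2 = 0 := mul_self_eq_zero.mp (by linarith)
  have h3 : v 3 = 0 := mul_self_eq_zero.mp (by linarith)
  funext i
  fin_cases i <;> simp [h0, h1, h2, h3, h40]

/-- The spheres of a time-like path in de Sitter space are pairwise disjoint
(nested): the difference of any two points of the path is not Lorentz-orthogonal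
to any nonzero light-like vector, and in particular no nonzero light-like vector
is orthogonal to both points. -/
theorem timelike_path_spheres_disjoint
    (a b : ℝ) (σ : ℝ → Fin 5 → ℝ)
    (hσ : ContDiff ℝ 1 σ)
    (hunit : ∀ t ∈ Set.Icc a b, lorentz (σ t) (σ t) = 1)
    (htime : ∀ t ∈ Set.Icc a b, lorentz (deriv σ t) (deriv σ t) < 0)
    (t₁ t₂ : ℝ) (ht₁ : t₁ ∈ Set.Icc a b) (ht₂ : t₂ ∈ Set.Icc a b) (h12 : t₁ < t₂)
    (v : Fin 5 → ℝ) (hv : v ≠ 0) (hvlight : lorentz v v = 0) :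
    lorentz (σ t₂ - σ t₁) v ≠ 0 ∧
      ¬(lorentz v (σ t₁) = 0 ∧ lorentz v (σ t₂) = 0) := by
  have hdiff : Differentiable ℝ σ := hσ.differentiable one_ne_zero
  set f : ℝ → ℝ := fun t => lorentz (σ t) v with hf
  have hder : ∀ t, HasDerivAt f (lorentz (deriv σ t) v) t := by
    intro t
    have hd : HasDerivAt σ (deriv σ t) t := (hdiff t).hasDerivAt
    have hi := hasDerivAt_pi.mp hd
    have : HasDerivAt f
        (deriv σ t 0 * v 0 + deriv σ t 1 * v 1 + deriv σ t 2 * v 2 +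
          deriv σ t 3 * v 3 - deriv σ t 4 * v 4) t := by
      exact ((((((hi 0).mul_const (v 0)).add ((hi 1).mul_const (v 1))).add
        ((hi 2).mul_const (v 2))).add ((hi 3).mul_const (v 3))).sub
        ((hi 4).mul_const (v 4)))
    simpa [lorentz] using this
  have key : lorentz (σ t₂ - σ t₁) v ≠ 0 := by
    intro h0
    have hfc : ContinuousOn f (Set.Icc t₁ t₂) := fun t _ => (hder t).continuousAt.continuousWithinAt
    obtain ⟨c, hc, hceq⟩ := exists_hasDerivAt_eq_slope f (fun t => lorentz (deriv σ t) v)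
      h12 hfc (fun x _ => hder x)
    have hfe : f t₂ - f t₁ = 0 := by
      simp only [hf, lorentz, Pi.sub_apply] at h0 ⊢
      linarith
    have hc0 : lorentz (deriv σ c) v = 0 := by
      rw [hceq, hfe, zero_div]
    have hcI : c ∈ Set.Icc a b :=
      ⟨le_trans ht₁.1 hc.1.le, le_trans hc.2.le ht₂.2⟩
    have := lightlike_orth_timelike_eq_zero (deriv σ c) v (htime c hcI) hvlight hc0
    exact hv this
  refine ⟨key, fun ⟨h1, h2⟩ => key ?_⟩
  simp only [lorentz, Pi.sub_apply] at h1 h2 ⊢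
  linarith
end

section
/- Let σ : [a,b] → ℝ⁵ be a C¹ curve with ⟨σ(t),σ(t)⟩ = 1, ⟨σ'(t),σ'(t)⟩ = 0 and σ'(t) ≠ 0 for all t (a light-like path in Λ⁴ with nonvanishing derivative). Let t₁ < t₂ in [a,b] and let v be a nonzero light-like vector such that σ'(ξ) is not a scalar multiple of v for some ξ ∈ [t₁,t₂]. Then ⟨σ(t₂) − σ(t₁), v⟩ ≠ 0. Consequently, if σ' takes two linearly independent values on [t₁,t₂], then no nonzero light-like vector is orthogonal to both σ(t₁) and σ(t₂), i.e. the corresponding 2-spheres of S³ are disjoint. -/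
set_option maxHeartbeats 1000000

lemma aux_cs (a0 a1 a2 a3 a4 b0 b1 b2 b3 b4 : ℝ)
    (ha : a0*a0+a1*a1+a2*a2+a3*a3 = a4*a4) (hb : b0*b0+b1*b1+b2*b2+b3*b3 = b4*b4) :
    (a0*b0+a1*b1+a2*b2+a3*b3 - a4*b4) * (a4*b4) ≤ 0 := by
  have h3 : (a0*a0+a1*a1+a2*a2+a3*a3)*(b0*b0+b1*b1+b2*b2+b3*b3) = (a4*b4)^2 := by
    rw [ha, hb]; ring
  have lag : (a0*a0+a1*a1+a2*a2+a3*a3)*(b0*b0+b1*b1+b2*b2+b3*b3)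
      - (a0*b0+a1*b1+a2*b2+a3*b3)^2
      = (a0*b1-a1*b0)^2 + (a0*b2-a2*b0)^2 + (a0*b3-a3*b0)^2
      + (a1*b2-a2*b1)^2 + (a1*b3-a3*b1)^2 + (a2*b3-a3*b2)^2 := by ring
  have hCS : (a0*b0+a1*b1+a2*b2+a3*b3)^2 ≤ (a4*b4)^2 := by
    nlinarith [lag, h3, sq_nonneg (a0*b1-a1*b0), sq_nonneg (a0*b2-a2*b0), sq_nonneg (a0*b3-a3*b0),
      sq_nonneg (a1*b2-a2*b1), sq_nonneg (a1*b3-a3*b1), sq_nonneg (a2*b3-a3*b2)]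
  nlinarith [hCS, sq_nonneg (a0*b0+a1*b1+a2*b2+a3*b3 - a4*b4)]

lemma null_time_ne {u : Fin 5 → ℝ} (hu : lorentz u u = 0) (h0 : u ≠ 0) : u 4 ≠ 0 := by
  intro h4
  apply h0
  simp only [lorentz] at hu
  funext i
  fin_cases i <;> simp <;>
    nlinarith [sq_nonneg (u 0), sq_nonneg (u 1), sq_nonneg (u 2), sq_nonneg (u 3)]

lemma lorentz_null_sign {u v : Fin 5 → ℝ} (hu : lorentz u u = 0) (hv : lorentz v v = 0) :
    lorentz u v * (u 4 * v 4) ≤ 0 := by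
  simp only [lorentz] at *
  exact aux_cs (u 0) (u 1) (u 2) (u 3) (u 4) (v 0) (v 1) (v 2) (v 3) (v 4)
    (by linarith) (by linarith)

lemma lorentz_null_orth {u v : Fin 5 → ℝ} (hu : lorentz u u = 0) (hv : lorentz v v = 0)
    (hv0 : v ≠ 0) (huv : lorentz u v = 0) : ∃ c : ℝ, u = c • v := by
  have hv4 : v 4 ≠ 0 := null_time_ne hv hv0
  simp only [lorentz] at hu hv huv
  have hsum : (u 0 * v 1 - u 1 * v 0)^2 + (u 0 * v 2 - u 2 * v 0)^2 + (u 0 * v 3 - u 3 * v 0)^2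
      + (u 1 * v 2 - u 2 * v 1)^2 + (u 1 * v 3 - u 3 * v 1)^2 + (u 2 * v 3 - u 3 * v 2)^2 = 0 := by
    linear_combination (v 0 * v 0 + v 1 * v 1 + v 2 * v 2 + v 3 * v 3) * hu + (u 4 * u 4) * hv
      - (u 0 * v 0 + u 1 * v 1 + u 2 * v 2 + u 3 * v 3 + u 4 * v 4) * huv
  have sqz : ∀ x : ℝ, x^2 ≤ 0 → x = 0 := fun x h =>
    pow_eq_zero_iff two_ne_zero |>.mp (le_antisymm h (sq_nonneg x))
  have e01 : u 0 * v 1 - u 1 * v 0 = 0 := sqz _ (by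
    nlinarith [sq_nonneg (u 0 * v 2 - u 2 * v 0), sq_nonneg (u 0 * v 3 - u 3 * v 0),
      sq_nonneg (u 1 * v 2 - u 2 * v 1), sq_nonneg (u 1 * v 3 - u 3 * v 1),
      sq_nonneg (u 2 * v 3 - u 3 * v 2)])
  have e02 : u 0 * v 2 - u 2 * v 0 = 0 := sqz _ (by
    nlinarith [sq_nonneg (u 0 * v 1 - u 1 * v 0), sq_nonneg (u 0 * v 3 - u 3 * v 0),
      sq_nonneg (u 1 * v 2 - u 2 * v 1), sq_nonneg (u 1 * v 3 - u 3 * v 1),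
      sq_nonneg (u 2 * v 3 - u 3 * v 2)])
  have e03 : u 0 * v 3 - u 3 * v 0 = 0 := sqz _ (by
    nlinarith [sq_nonneg (u 0 * v 1 - u 1 * v 0), sq_nonneg (u 0 * v 2 - u 2 * v 0),
      sq_nonneg (u 1 * v 2 - u 2 * v 1), sq_nonneg (u 1 * v 3 - u 3 * v 1),
      sq_nonneg (u 2 * v 3 - u 3 * v 2)])
  have e12 : u 1 * v 2 - u 2 * v 1 = 0 := sqz _ (by
    nlinarith [sq_nonneg (u 0 * v 1 - u 1 * v 0), sq_nonneg (u 0 * v 2 - u 2 * v 0),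
      sq_nonneg (u 0 * v 3 - u 3 * v 0), sq_nonneg (u 1 * v 3 - u 3 * v 1),
      sq_nonneg (u 2 * v 3 - u 3 * v 2)])
  have e13 : u 1 * v 3 - u 3 * v 1 = 0 := sqz _ (by
    nlinarith [sq_nonneg (u 0 * v 1 - u 1 * v 0), sq_nonneg (u 0 * v 2 - u 2 * v 0),
      sq_nonneg (u 0 * v 3 - u 3 * v 0), sq_nonneg (u 1 * v 2 - u 2 * v 1),
      sq_nonneg (u 2 * v 3 - u 3 * v 2)])
  have e23 : u 2 * v 3 - u 3 * v 2 = 0 := sqz _ (by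
    nlinarith [sq_nonneg (u 0 * v 1 - u 1 * v 0), sq_nonneg (u 0 * v 2 - u 2 * v 0),
      sq_nonneg (u 0 * v 3 - u 3 * v 0), sq_nonneg (u 1 * v 2 - u 2 * v 1),
      sq_nonneg (u 1 * v 3 - u 3 * v 1)])
  have key : ∀ x y : ℝ, x * v 4 * v 4 = y * v 4 → x * v 4 = y := fun x y h =>
    mul_right_cancel₀ hv4 (by linarith : (x * v 4) * v 4 = y * v 4)
  have h0 : u 0 * v 4 = u 4 * v 0 := key _ _ (by
    linear_combination -u 0 * hv + v 1 * e01 + v 2 * e02 + v 3 * e03 + v 0 * huv)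
  have h1 : u 1 * v 4 = u 4 * v 1 := key _ _ (by
    linear_combination -u 1 * hv - v 0 * e01 + v 2 * e12 + v 3 * e13 + v 1 * huv)
  have h2 : u 2 * v 4 = u 4 * v 2 := key _ _ (by
    linear_combination -u 2 * hv - v 0 * e02 - v 1 * e12 + v 3 * e23 + v 2 * huv)
  have h3 : u 3 * v 4 = u 4 * v 3 := key _ _ (by
    linear_combination -u 3 * hv - v 0 * e03 - v 1 * e13 - v 2 * e23 + v 3 * huv)
  have h4 : u 4 * v 4 = u 4 * v 4 := rfl
  have hrel : ∀ j : Fin 5, u j * v 4 = u 4 * v j := by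
    intro j
    fin_cases j
    exacts [h0, h1, h2, h3, h4]
  refine ⟨u 4 / v 4, funext fun i => ?_⟩
  have := hrel i
  simp only [Pi.smul_apply, smul_eq_mul]
  field_simp
  linarith [this]
lemma key_step (a b : ℝ) (σ : ℝ → Fin 5 → ℝ)
    (hσ : ContDiff ℝ 1 σ)
    (hlight : ∀ t ∈ Set.Icc a b, lorentz (deriv σ t) (deriv σ t) = 0)
    (hne : ∀ t ∈ Set.Icc a b, deriv σ t ≠ 0)
    (t₁ t₂ : ℝ) (ht₁ : t₁ ∈ Set.Icc a b) (ht₂ : t₂ ∈ Set.Icc a b) (h12 : t₁ < t₂)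
    (v : Fin 5 → ℝ) (hv : v ≠ 0) (hvlight : lorentz v v = 0)
    (hξ : ∃ ξ ∈ Set.Icc t₁ t₂, ∀ c : ℝ, deriv σ ξ ≠ c • v) :
    lorentz (σ t₂ - σ t₁) v ≠ 0 := by
  obtain ⟨ξ, hξmem, hξne⟩ := hξ
  have hsub : Set.Icc t₁ t₂ ⊆ Set.Icc a b := Set.Icc_subset_Icc ht₁.1 ht₂.2
  have hdiffσ : Differentiable ℝ σ := hσ.differentiable one_ne_zero
  set f : ℝ → ℝ := fun t => lorentz (σ t) v with hfdef
  have hder : ∀ t, HasDerivAt f (lorentz (deriv σ t) v) t := by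
    intro t
    have hc : ∀ i : Fin 5, HasDerivAt (fun s => σ s i) (deriv σ t i) t :=
      fun i => hasDerivAt_pi.mp (hdiffσ t).hasDerivAt i
    have h2 := (((((hc 0).mul_const (v 0)).add ((hc 1).mul_const (v 1))).add
      ((hc 2).mul_const (v 2))).add ((hc 3).mul_const (v 3))).sub ((hc 4).mul_const (v 4))
    exact h2
  have hderiv_eq : ∀ t, deriv f t = lorentz (deriv σ t) v := fun t => (hder t).deriv
  have hcontf : Continuous f :=
    Differentiable.continuous (fun t => (hder t).differentiableAt)
  have hs4 : ∀ t ∈ Set.Icc a b, deriv σ t 4 ≠ 0 := fun t ht =>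
    null_time_ne (hlight t ht) (hne t ht)
  have hv4 : v 4 ≠ 0 := null_time_ne hvlight hv
  have hscont : ContinuousOn (fun t => deriv σ t 4) (Set.Icc a b) :=
    ((continuous_apply (4 : Fin 5)).comp (hσ.continuous_deriv le_rfl)).continuousOn
  have hsign : ∀ t ∈ Set.Icc t₁ t₂, 0 < deriv σ t 4 * deriv σ ξ 4 := by
    intro t ht
    by_contra hle
    push_neg at hle
    have h0mem : (0 : ℝ) ∈ Set.uIcc (deriv σ t 4) (deriv σ ξ 4) := by
      rcases mul_nonpos_iff.mp hle with ⟨h1, h2⟩ | ⟨h1, h2⟩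
      · exact Set.mem_uIcc.mpr (Or.inr ⟨h2, h1⟩)
      · exact Set.mem_uIcc.mpr (Or.inl ⟨h1, h2⟩)
    have husub : Set.uIcc t ξ ⊆ Set.Icc a b :=
      Set.uIcc_subset_Icc (hsub ht) (hsub hξmem)
    obtain ⟨c, hc, hc0⟩ := intermediate_value_uIcc (hscont.mono husub) h0mem
    exact hs4 c (husub hc) hc0
  have hkey : ∀ t ∈ Set.Icc t₁ t₂, deriv f t * (deriv σ ξ 4 * v 4) ≤ 0 := by
    intro t ht
    have A := lorentz_null_sign (hlight t (hsub ht)) hvlight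
    have B := hsign t ht
    have hstsq : 0 < deriv σ t 4 * deriv σ t 4 :=
      mul_self_pos.mpr (hs4 t (hsub ht))
    rw [hderiv_eq]
    nlinarith [A, B, hstsq]
  have hK0 : deriv σ ξ 4 * v 4 ≠ 0 := mul_ne_zero (hs4 ξ (hsub hξmem)) hv4
  intro hcontra
  have heq : f t₂ = f t₁ := by
    simp only [lorentz, Pi.sub_apply] at hcontra
    simp only [hfdef, lorentz]
    linarith
  have ht₁m : t₁ ∈ Set.Icc t₁ t₂ := ⟨le_refl _, le_of_lt h12⟩
  have ht₂m : t₂ ∈ Set.Icc t₁ t₂ := ⟨le_of_lt h12, le_refl _⟩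
  have hdiffon : DifferentiableOn ℝ f (interior (Set.Icc t₁ t₂)) :=
    fun x _ => (hder x).differentiableAt.differentiableWithinAt
  have hconst : ∀ t ∈ Set.Icc t₁ t₂, f t = f t₁ := by
    rcases hK0.lt_or_gt with hK | hK
    · have hmono : MonotoneOn f (Set.Icc t₁ t₂) := by
        apply monotoneOn_of_deriv_nonneg (convex_Icc t₁ t₂) hcontf.continuousOn hdiffon
        intro x hx
        rw [interior_Icc] at hx
        have := hkey x ⟨le_of_lt hx.1, le_of_lt hx.2⟩
        nlinarith [this, hK]
      intro t ht
      have h1 : f t₁ ≤ f t := hmono ht₁m ht ht.1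
      have h2 : f t ≤ f t₂ := hmono ht ht₂m ht.2
      linarith
    · have hmono : AntitoneOn f (Set.Icc t₁ t₂) := by
        apply antitoneOn_of_deriv_nonpos (convex_Icc t₁ t₂) hcontf.continuousOn hdiffon
        intro x hx
        rw [interior_Icc] at hx
        have := hkey x ⟨le_of_lt hx.1, le_of_lt hx.2⟩
        nlinarith [this, hK]
      intro t ht
      have h1 : f t ≤ f t₁ := hmono ht₁m ht ht.1
      have h2 : f t₂ ≤ f t := hmono ht ht₂m ht.2
      linarith
  have hW1 : HasDerivWithinAt f (lorentz (deriv σ ξ) v) (Set.Icc t₁ t₂) ξ :=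
    (hder ξ).hasDerivWithinAt
  have hW2 : HasDerivWithinAt f 0 (Set.Icc t₁ t₂) ξ :=
    (hasDerivWithinAt_const ξ (Set.Icc t₁ t₂) (f t₁)).congr
      (fun y hy => hconst y hy) (hconst ξ hξmem)
  have hud := uniqueDiffOn_Icc h12 ξ hξmem
  have hzero : lorentz (deriv σ ξ) v = 0 := by
    have e1 := hW1.derivWithin hud
    have e2 := hW2.derivWithin hud
    rw [e1] at e2; exact e2
  obtain ⟨c, hc⟩ := lorentz_null_orth (hlight ξ (hsub hξmem)) hvlight hv hzero
  exact hξne c hc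

/-- For a light-like path in de Sitter space with nonvanishing derivative:
if on `[t₁,t₂]` the derivative is somewhere not a multiple of a given nonzero
light-like vector `v`, then `⟨σ(t₂) − σ(t₁), v⟩ ≠ 0`; consequently, if the
derivative takes two linearly independent values on `[t₁,t₂]`, then no nonzero
light-like vector is orthogonal to both `σ(t₁)` and `σ(t₂)`, i.e. the
corresponding 2-spheres of S³ are disjoint. -/
theorem lightlike_path_spheres_disjoint
    (a b : ℝ) (σ : ℝ → Fin 5 → ℝ)
    (hσ : ContDiff ℝ 1 σ)
    (hunit : ∀ t ∈ Set.Icc a b, lorentz (σ t) (σ t) = 1)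
    (hlight : ∀ t ∈ Set.Icc a b, lorentz (deriv σ t) (deriv σ t) = 0)
    (hne : ∀ t ∈ Set.Icc a b, deriv σ t ≠ 0)
    (t₁ t₂ : ℝ) (ht₁ : t₁ ∈ Set.Icc a b) (ht₂ : t₂ ∈ Set.Icc a b) (h12 : t₁ < t₂)
    (v : Fin 5 → ℝ) (hv : v ≠ 0) (hvlight : lorentz v v = 0)
    (hξ : ∃ ξ ∈ Set.Icc t₁ t₂, ∀ c : ℝ, deriv σ ξ ≠ c • v) :
    lorentz (σ t₂ - σ t₁) v ≠ 0 ∧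
    ((∃ ξ₁ ∈ Set.Icc t₁ t₂, ∃ ξ₂ ∈ Set.Icc t₁ t₂,
        LinearIndependent ℝ ![deriv σ ξ₁, deriv σ ξ₂]) →
      ∀ w : Fin 5 → ℝ, w ≠ 0 → lorentz w w = 0 →
        ¬(lorentz w (σ t₁) = 0 ∧ lorentz w (σ t₂) = 0)) := by
  constructor
  · exact key_step a b σ hσ hlight hne t₁ t₂ ht₁ ht₂ h12 v hv hvlight hξ
  · rintro ⟨ξ₁, hξ₁, ξ₂, hξ₂, hind⟩ w hw hwl ⟨h1, h2⟩
    have hξw : ∃ ξ ∈ Set.Icc t₁ t₂, ∀ c : ℝ, deriv σ ξ ≠ c • w := by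
      by_contra hcon
      push_neg at hcon
      obtain ⟨c₁, hc₁⟩ := hcon ξ₁ hξ₁
      obtain ⟨c₂, hc₂⟩ := hcon ξ₂ hξ₂
      rw [linearIndependent_fin2] at hind
      obtain ⟨hne2, hforall⟩ := hind
      simp only [Matrix.cons_val_one, Matrix.head_cons, Matrix.cons_val_zero] at hne2 hforall
      have hc₂0 : c₂ ≠ 0 := by
        intro h
        apply hne2
        rw [hc₂, h, zero_smul]
      exact hforall (c₁ / c₂) (by
        rw [hc₁, hc₂, smul_smul, div_mul_cancel₀ _ hc₂0])
    have hkey := key_step a b σ hσ hlight hne t₁ t₂ ht₁ ht₂ h12 w hw hwl hξw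
    apply hkey
    simp only [lorentz, Pi.sub_apply] at h1 h2 ⊢
    linear_combination h2 - h1
end

section
/- Let γ : ℝ → ℝ⁵ be a smooth curve with γ(s) ≠ 0 and ⟨γ(s),γ(s)⟩ = 0 for all s (a curve in the light cone, representing a curve Γ in S³), and assume that γ(s), γ'(s), γ''(s), γ'''(s) are linearly independent for every s (the curve Γ is vertex-free). Let σ : ℝ → ℝ⁵ be smooth with ⟨σ(s),σ(s)⟩ = 1, ⟨σ'(s),σ'(s)⟩ = 1, and ⟨σ(s), γ^{(j)}(s)⟩ = 0 for j = 0,1,2,3 and all s (σ(s) is the osculating sphere of Γ at Γ(s), parametrized by arc length). Then for every s the geodesic curvature vector k_g(s) = σ(s) + σ''(s) satisfies: k_g(s) ≠ 0, ⟨k_g(s),k_g(s)⟩ = 0, and k_g(s) is a scalar multiple of γ(s); moreover ⟨σ'(s), γ(s)⟩ = ⟨σ'(s), γ'(s)⟩ = ⟨σ'(s), γ''(s)⟩ = 0 (the osculating circles of Γ are the characteristic circles of the canal). -/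
lemma lorentz_comm (x y : Fin 5 → ℝ) : lorentz x y = lorentz y x := by
  simp only [lorentz]; ring

lemma lorentz_add_left (x y z : Fin 5 → ℝ) :
    lorentz (x + y) z = lorentz x z + lorentz y z := by
  simp only [lorentz, Pi.add_apply]; ring

lemma lorentz_smul_left (c : ℝ) (x z : Fin 5 → ℝ) :
    lorentz (c • x) z = c * lorentz x z := by
  simp only [lorentz, Pi.smul_apply, smul_eq_mul]; ring

lemma lorentz_smul_smul (c d : ℝ) (x z : Fin 5 → ℝ) :
    lorentz (c • x) (d • z) = c * d * lorentz x z := by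
  simp only [lorentz, Pi.smul_apply, smul_eq_mul]; ring

lemma hasDerivAt_lorentz {f g : ℝ → Fin 5 → ℝ} {f' g' : Fin 5 → ℝ} {s : ℝ}
    (hf : HasDerivAt f f' s) (hg : HasDerivAt g g' s) :
    HasDerivAt (fun t => lorentz (f t) (g t)) (lorentz f' (g s) + lorentz (f s) g') s := by
  have hfi : ∀ i, HasDerivAt (fun t => f t i) (f' i) s := hasDerivAt_pi.mp hf
  have hgi : ∀ i, HasDerivAt (fun t => g t i) (g' i) s := hasDerivAt_pi.mp hg
  have := (((((hfi 0).mul (hgi 0)).add ((hfi 1).mul (hgi 1))).add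
      ((hfi 2).mul (hgi 2))).add ((hfi 3).mul (hgi 3))).sub ((hfi 4).mul (hgi 4))
  exact this.congr_deriv (by simp only [lorentz]; ring)

/-- Differentiating a constant Lorentz pairing. -/
lemma lorentz_deriv_zero {u v : ℝ → Fin 5 → ℝ} (hu : Differentiable ℝ u)
    (hv : Differentiable ℝ v) {c : ℝ} (h : ∀ s, lorentz (u s) (v s) = c) (s : ℝ) :
    lorentz (deriv u s) (v s) + lorentz (u s) (deriv v s) = 0 := by
  have H := hasDerivAt_lorentz (hu s).hasDerivAt (hv s).hasDerivAt
  simp only [h] at H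
  exact H.unique (hasDerivAt_const s c)

lemma sq4_eq_zero {a b c d : ℝ} (h : a ^ 2 + b ^ 2 + c ^ 2 + d ^ 2 = 0) :
    a = 0 ∧ b = 0 ∧ c = 0 ∧ d = 0 := by
  have ha := sq_nonneg a
  have hb := sq_nonneg b
  have hc := sq_nonneg c
  have hd := sq_nonneg d
  refine ⟨?_, ?_, ?_, ?_⟩ <;>
    · apply pow_eq_zero_iff (n := 2) (by norm_num) |>.mp
      linarith

/-- Two orthogonal null vectors for the Lorentz form are proportional. -/
lemma null_orthogonal {x y : Fin 5 → ℝ} (hx : x ≠ 0) (hxx : lorentz x x = 0)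
    (hxy : lorentz x y = 0) (hyy : lorentz y y = 0) : ∃ c : ℝ, y = c • x := by
  simp only [lorentz] at hxx hxy hyy
  have hx4 : x 4 ≠ 0 := by
    intro h4
    apply hx
    rw [h4] at hxx
    have hsq : x 0 ^ 2 + x 1 ^ 2 + x 2 ^ 2 + x 3 ^ 2 = 0 := by linear_combination hxx
    obtain ⟨h0, h1, h2, h3⟩ := sq4_eq_zero hsq
    funext i; fin_cases i <;> simp [h0, h1, h2, h3, h4]
  set c : ℝ := y 4 / x 4 with hc
  have h4 : y 4 = c * x 4 := by rw [hc, div_mul_cancel₀ _ hx4]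
  have key : (y 0 - c * x 0) ^ 2 + (y 1 - c * x 1) ^ 2 + (y 2 - c * x 2) ^ 2
      + (y 3 - c * x 3) ^ 2 = 0 := by
    linear_combination hyy - 2 * c * hxy + c ^ 2 * hxx + (y 4 - c * x 4) * h4
  obtain ⟨k0, k1, k2, k3⟩ := sq4_eq_zero key
  have hy0 : y 0 = c * x 0 := by linarith
  have hy1 : y 1 = c * x 1 := by linarith
  have hy2 : y 2 = c * x 2 := by linarith
  have hy3 : y 3 = c * x 3 := by linarith
  refine ⟨c, funext fun i => ?_⟩
  fin_cases i <;> simp [Pi.smul_apply, smul_eq_mul, hy0, hy1, hy2, hy3, h4]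

/-- The osculating spheres of a vertex-free curve in S³ form a drill: the
geodesic curvature vector of the arc-length parametrized path of osculating
spheres is nonzero, light-like, and spans the point of the curve; and the
osculating circles are the characteristic circles of the canal. -/
theorem osculating_spheres_form_drill
    (γ : ℝ → Fin 5 → ℝ) (hγ : ContDiff ℝ (⊤ : ℕ∞) γ)
    (hγne : ∀ s, γ s ≠ 0)
    (hγnull : ∀ s, lorentz (γ s) (γ s) = 0)
    (hvertex_free : ∀ s, LinearIndependent ℝ
      ![γ s, deriv γ s, deriv (deriv γ) s, deriv (deriv (deriv γ)) s])
    (σ : ℝ → Fin 5 → ℝ) (hσ : ContDiff ℝ (⊤ : ℕ∞) σ)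
    (hunit : ∀ s, lorentz (σ s) (σ s) = 1)
    (harc : ∀ s, lorentz (deriv σ s) (deriv σ s) = 1)
    (hosc : ∀ s, lorentz (σ s) (γ s) = 0 ∧ lorentz (σ s) (deriv γ s) = 0 ∧
      lorentz (σ s) (deriv (deriv γ) s) = 0 ∧
      lorentz (σ s) (deriv (deriv (deriv γ)) s) = 0) :
    ∀ s,
      σ s + deriv (deriv σ) s ≠ 0 ∧
      lorentz (σ s + deriv (deriv σ) s) (σ s + deriv (deriv σ) s) = 0 ∧
      (∃ c : ℝ, σ s + deriv (deriv σ) s = c • γ s) ∧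
      lorentz (deriv σ s) (γ s) = 0 ∧
      lorentz (deriv σ s) (deriv γ s) = 0 ∧
      lorentz (deriv σ s) (deriv (deriv γ) s) = 0 := by
  set γ1 := deriv γ with hγ1def
  set γ2 := deriv γ1 with hγ2def
  set γ3 := deriv γ2 with hγ3def
  set σ1 := deriv σ with hσ1def
  set σ2 := deriv σ1 with hσ2def
  -- differentiability
  have hgtop : ContDiff ℝ (↑(⊤ : ℕ∞)) γ := hγ.of_le (by simp)
  have hγd : Differentiable ℝ γ := hgtop.differentiable (by simp)
  have hγ1c : ContDiff ℝ (↑(⊤ : ℕ∞)) γ1 := (contDiff_infty_iff_deriv.mp hgtop).2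
  have hγ1d : Differentiable ℝ γ1 := hγ1c.differentiable (by simp)
  have hγ2c : ContDiff ℝ (↑(⊤ : ℕ∞)) γ2 := (contDiff_infty_iff_deriv.mp hγ1c).2
  have hγ2d : Differentiable ℝ γ2 := hγ2c.differentiable (by simp)
  have hstop : ContDiff ℝ (↑(⊤ : ℕ∞)) σ := hσ.of_le (by simp)
  have hσd : Differentiable ℝ σ := hstop.differentiable (by simp)
  have hσ1c : ContDiff ℝ (↑(⊤ : ℕ∞)) σ1 := (contDiff_infty_iff_deriv.mp hstop).2
  have hσ1d : Differentiable ℝ σ1 := hσ1c.differentiable (by simp)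
  -- basic scalar identities, valid for all s
  have hA0 : ∀ s, lorentz (σ s) (γ s) = 0 := fun s => (hosc s).1
  have hA1 : ∀ s, lorentz (σ s) (γ1 s) = 0 := fun s => (hosc s).2.1
  have hA2 : ∀ s, lorentz (σ s) (γ2 s) = 0 := fun s => (hosc s).2.2.1
  have hA3 : ∀ s, lorentz (σ s) (γ3 s) = 0 := fun s => (hosc s).2.2.2
  have hγ1γ : ∀ s, lorentz (γ1 s) (γ s) = 0 := by
    intro s
    have h := lorentz_deriv_zero hγd hγd hγnull s
    rw [← hγ1def, lorentz_comm (γ s)] at h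
    linarith
  have hγ2γ : ∀ s, lorentz (γ2 s) (γ s) = -lorentz (γ1 s) (γ1 s) := by
    intro s
    have h := lorentz_deriv_zero hγ1d hγd hγ1γ s
    rw [← hγ2def, ← hγ1def] at h
    linarith
  have hσ1σ : ∀ s, lorentz (σ1 s) (σ s) = 0 := by
    intro s
    have h := lorentz_deriv_zero hσd hσd hunit s
    rw [← hσ1def, lorentz_comm (σ s)] at h
    linarith
  have hσ2σ : ∀ s, lorentz (σ2 s) (σ s) = -1 := by
    intro s
    have h := lorentz_deriv_zero hσ1d hσd hσ1σ s
    rw [← hσ2def, ← hσ1def, lorentz_comm (σ1 s) (σ1 s)] at h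
    have h2 := harc s
    linarith
  have hσ2σ1 : ∀ s, lorentz (σ2 s) (σ1 s) = 0 := by
    intro s
    have h := lorentz_deriv_zero hσ1d hσ1d harc s
    rw [← hσ2def, lorentz_comm (σ1 s) (σ2 s)] at h
    linarith
  have hσ1γ : ∀ s, lorentz (σ1 s) (γ s) = 0 := by
    intro s
    have h := lorentz_deriv_zero hσd hγd hA0 s
    rw [← hσ1def, ← hγ1def] at h
    have := hA1 s
    linarith
  have hσ1γ1 : ∀ s, lorentz (σ1 s) (γ1 s) = 0 := by
    intro s
    have h := lorentz_deriv_zero hσd hγ1d hA1 s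
    rw [← hσ1def, ← hγ2def] at h
    have := hA2 s
    linarith
  have hσ1γ2 : ∀ s, lorentz (σ1 s) (γ2 s) = 0 := by
    intro s
    have h := lorentz_deriv_zero hσd hγ2d hA2 s
    rw [← hσ1def, ← hγ3def] at h
    have := hA3 s
    linarith
  have hσ2γ : ∀ s, lorentz (σ2 s) (γ s) = 0 := by
    intro s
    have h := lorentz_deriv_zero hσ1d hγd hσ1γ s
    rw [← hσ2def, ← hγ1def] at h
    have := hσ1γ1 s
    linarith
  have hσ2γ1 : ∀ s, lorentz (σ2 s) (γ1 s) = 0 := by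
    intro s
    have h := lorentz_deriv_zero hσ1d hγ1d hσ1γ1 s
    rw [← hσ2def, ← hγ2def] at h
    have := hσ1γ2 s
    linarith
  have hσ2γ2 : ∀ s, lorentz (σ2 s) (γ2 s) = -lorentz (σ1 s) (γ3 s) := by
    intro s
    have h := lorentz_deriv_zero hσ1d hγ2d hσ1γ2 s
    rw [← hσ2def, ← hγ3def] at h
    linarith
  -- now work at a fixed point s
  intro s
  -- commuted versions at s
  have hA0' : lorentz (γ s) (σ s) = 0 := by rw [lorentz_comm]; exact hA0 s
  have hA1' : lorentz (γ1 s) (σ s) = 0 := by rw [lorentz_comm]; exact hA1 s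
  have hA2' : lorentz (γ2 s) (σ s) = 0 := by rw [lorentz_comm]; exact hA2 s
  have hA3' : lorentz (γ3 s) (σ s) = 0 := by rw [lorentz_comm]; exact hA3 s
  have hσ1γ' : lorentz (γ s) (σ1 s) = 0 := by rw [lorentz_comm]; exact hσ1γ s
  have hσ1γ1' : lorentz (γ1 s) (σ1 s) = 0 := by rw [lorentz_comm]; exact hσ1γ1 s
  have hσ1γ2' : lorentz (γ2 s) (σ1 s) = 0 := by rw [lorentz_comm]; exact hσ1γ2 s
  have hσ1σ' : lorentz (σ s) (σ1 s) = 0 := by rw [lorentz_comm]; exact hσ1σ s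
  have hγ1γ' : lorentz (γ s) (γ1 s) = 0 := by rw [lorentz_comm]; exact hγ1γ s
  set p : ℝ := lorentz (γ1 s) (γ1 s) with hp
  set q : ℝ := lorentz (γ3 s) (σ1 s) with hq
  -- the five vectors form a basis
  set v : Fin 5 → (Fin 5 → ℝ) := ![γ s, γ1 s, γ2 s, γ3 s, σ s] with hv
  have hv0 : v 0 = γ s := rfl
  have hv1 : v 1 = γ1 s := rfl
  have hv2 : v 2 = γ2 s := rfl
  have hv3 : v 3 = γ3 s := rfl
  have hv4 : v 4 = σ s := rfl
  have hli : LinearIndependent ℝ v := by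
    rw [Fintype.linearIndependent_iff]
    intro g hg
    rw [Fin.sum_univ_five] at hg
    have hg4 : g 4 = 0 := by
      have h0 : lorentz (g 0 • v 0 + g 1 • v 1 + g 2 • v 2 + g 3 • v 3 + g 4 • v 4) (σ s)
          = 0 := by rw [hg]; simp [lorentz]
      simp only [lorentz_add_left, lorentz_smul_left, hv0, hv1, hv2, hv3, hv4,
        hA0', hA1', hA2', hA3', hunit s] at h0
      linarith
    have hrest := Fintype.linearIndependent_iff.mp (hvertex_free s)
      ![g 0, g 1, g 2, g 3] (by
        rw [Fin.sum_univ_four]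
        simp only [Matrix.cons_val_zero, Matrix.cons_val_one, Matrix.head_cons,
          Matrix.cons_val_two, Matrix.tail_cons, Matrix.cons_val_three]
        rw [hg4, zero_smul, add_zero] at hg
        simp only [hv0, hv1, hv2, hv3] at hg
        exact hg)
    intro i
    fin_cases i
    · exact hrest 0
    · exact hrest 1
    · exact hrest 2
    · exact hrest 3
    · exact hg4
  have hcard : Fintype.card (Fin 5) = Module.finrank ℝ (Fin 5 → ℝ) := by
    simp [Module.finrank_fintype_fun_eq_card]
  set B := basisOfLinearIndependentOfCardEqFinrank hli hcard with hB
  have hBv : ∀ i, B i = v i := by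
    intro i
    rw [hB, coe_basisOfLinearIndependentOfCardEqFinrank]
  have hrepr : ∀ x : Fin 5 → ℝ, x = B.repr x 0 • v 0 + B.repr x 1 • v 1
      + B.repr x 2 • v 2 + B.repr x 3 • v 3 + B.repr x 4 • v 4 := by
    intro x
    have h := B.sum_repr x
    rw [Fin.sum_univ_five] at h
    simp only [hBv] at h
    exact h.symm
  have hpair : ∀ x w : Fin 5 → ℝ, lorentz x w
      = B.repr x 0 * lorentz (v 0) w + B.repr x 1 * lorentz (v 1) w
      + B.repr x 2 * lorentz (v 2) w + B.repr x 3 * lorentz (v 3) w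
      + B.repr x 4 * lorentz (v 4) w := by
    intro x w
    conv_lhs => rw [hrepr x]
    simp only [lorentz_add_left, lorentz_smul_left]
  -- q ≠ 0
  have hqne : q ≠ 0 := by
    intro hq0
    have h := hpair (σ1 s) (σ1 s)
    rw [harc s, hv0, hv1, hv2, hv3, hv4, hσ1γ', hσ1γ1', hσ1γ2', ← hq, hq0, hσ1σ'] at h
    simp at h
  -- p ≠ 0
  have hpne : p ≠ 0 := by
    intro hp0
    obtain ⟨c, hc⟩ := null_orthogonal (hγne s) (hγnull s) hγ1γ' (by rw [← hp]; exact hp0)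
    have h := Fintype.linearIndependent_iff.mp (hvertex_free s) ![c, -1, 0, 0] (by
      rw [Fin.sum_univ_four]
      simp only [Matrix.cons_val_zero, Matrix.cons_val_one, Matrix.head_cons,
        Matrix.cons_val_two, Matrix.tail_cons, Matrix.cons_val_three]
      rw [hc]
      module) 1
    norm_num at h
  -- the geodesic curvature vector
  set k : Fin 5 → ℝ := σ s + σ2 s with hk
  have hkσ : lorentz k (σ s) = 0 := by
    rw [hk, lorentz_add_left, hunit s, hσ2σ s]; ring
  have hkσ1 : lorentz k (σ1 s) = 0 := by
    rw [hk, lorentz_add_left, hσ1σ', hσ2σ1 s]; ring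
  have hkγ : lorentz k (γ s) = 0 := by
    rw [hk, lorentz_add_left, hA0 s, hσ2γ s]; ring
  have hkγ1 : lorentz k (γ1 s) = 0 := by
    rw [hk, lorentz_add_left, hA1 s, hσ2γ1 s]; ring
  have hkγ2 : lorentz k (γ2 s) = -q := by
    rw [hk, lorentz_add_left, hA2 s, hσ2γ2 s, lorentz_comm (σ1 s), ← hq]; ring
  have ha4 : B.repr k 4 = 0 := by
    have h := hpair k (σ s)
    rw [hkσ, hv0, hv1, hv2, hv3, hv4, hA0', hA1', hA2', hA3', hunit s] at h
    linarith
  have ha3 : B.repr k 3 = 0 := by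
    have h := hpair k (σ1 s)
    rw [hkσ1, hv0, hv1, hv2, hv3, hv4, hσ1γ', hσ1γ1', hσ1γ2', hσ1σ', ← hq] at h
    have h3 : B.repr k 3 * q = 0 := by linarith
    rcases mul_eq_zero.mp h3 with h' | h'
    · exact h'
    · exact absurd h' hqne
  have ha2 : B.repr k 2 = 0 := by
    have h := hpair k (γ s)
    rw [hkγ, hv0, hv1, hv2, hv3, hv4, hγnull s, hγ1γ s, hγ2γ s, ← hp, hA0 s, ha3, ha4] at h
    have h2 : B.repr k 2 * p = 0 := by linarith
    rcases mul_eq_zero.mp h2 with h' | h'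
    · exact h'
    · exact absurd h' hpne
  have ha1 : B.repr k 1 = 0 := by
    have h := hpair k (γ1 s)
    rw [hkγ1, hv0, hv1, hv2, hv3, hv4, hγ1γ', ← hp, hA1 s, ha2, ha3, ha4] at h
    have h2 : B.repr k 1 * p = 0 := by linarith
    rcases mul_eq_zero.mp h2 with h' | h'
    · exact h'
    · exact absurd h' hpne
  have ha0 : B.repr k 0 * p = q := by
    have h := hpair k (γ2 s)
    rw [hkγ2, hv0, hv1, hv2, hv3, hv4, lorentz_comm (γ s) (γ2 s), hγ2γ s, ← hp,
      hA2 s, ha1, ha2, ha3, ha4] at h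
    linarith
  have ha0ne : B.repr k 0 ≠ 0 := by
    intro h0
    rw [h0, zero_mul] at ha0
    exact hqne ha0.symm
  have hkval : k = B.repr k 0 • γ s := by
    have h := hrepr k
    rw [ha1, ha2, ha3, ha4, hv0] at h
    simpa using h
  refine ⟨?_, ?_, ⟨B.repr k 0, hkval⟩, hσ1γ s, hσ1γ1 s, hσ1γ2 s⟩
  · rw [hkval]
    exact smul_ne_zero ha0ne (hγne s)
  · rw [hkval, lorentz_smul_smul, hγnull s, mul_zero]
end

section
/- Let u, v, w ∈ ℝ⁵ satisfy ⟨u,u⟩ = 0, u ≠ 0, ⟨v,v⟩ = ⟨w,w⟩ = 1, and ⟨u,v⟩ = ⟨u,w⟩ = ⟨v,w⟩ = 0, and let λ : ℝ → ℝ be a smooth 2π-periodic function. Define σ(s) = λ(s)u + (cos s)v + (sin s)w. Then σ is a 2π-periodic curve satisfying ⟨σ(s),σ(s)⟩ = 1 and ⟨σ'(s),σ'(s)⟩ = 1 for all s (a closed space-like curve in Λ⁴ parametrized by arc length, of total length 2π), and its geodesic curvature vector satisfies σ(s) + σ''(s) = (λ(s) + λ''(s))u, which is light-like for every s. -/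
lemma lor_expand (a b c : ℝ) (x y z : Fin 5 → ℝ) :
    lorentz (a • x + b • y + c • z) (a • x + b • y + c • z) =
      a ^ 2 * lorentz x x + b ^ 2 * lorentz y y + c ^ 2 * lorentz z z +
        2 * a * b * lorentz x y + 2 * a * c * lorentz x z + 2 * b * c * lorentz y z := by
  simp only [lorentz, Pi.add_apply, Pi.smul_apply, smul_eq_mul]
  ring

lemma lor_smul_self (c : ℝ) (x : Fin 5 → ℝ) :
    lorentz (c • x) (c • x) = c ^ 2 * lorentz x x := by
  simp only [lorentz, Pi.smul_apply, smul_eq_mul]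
  ring

/-- The curves `σ(s) = λ(s)u + cos s · v + sin s · w`, with `u` light-like
orthogonal to the orthonormal pair `v, w` and `λ` a `2π`-periodic smooth
function, are closed space-like curves in Λ⁴ of length `2π` parametrized by
arc length, whose geodesic curvature vector `(λ + λ'')u` is light-like. -/
theorem drill_examples_of_length_two_pi
    (u v w : Fin 5 → ℝ)
    (hu : lorentz u u = 0) (hune : u ≠ 0)
    (hv : lorentz v v = 1) (hw : lorentz w w = 1)
    (huv : lorentz u v = 0) (huw : lorentz u w = 0) (hvw : lorentz v w = 0)
    (l : ℝ → ℝ) (hl : ContDiff ℝ (⊤ : ℕ∞) l)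
    (hlper : ∀ s, l (s + 2 * Real.pi) = l s)
    (σ : ℝ → Fin 5 → ℝ)
    (hσdef : σ = fun s => l s • u + Real.cos s • v + Real.sin s • w) :
    (∀ s, σ (s + 2 * Real.pi) = σ s) ∧
    (∀ s, lorentz (σ s) (σ s) = 1) ∧
    (∀ s, lorentz (deriv σ s) (deriv σ s) = 1) ∧
    (∀ s, σ s + deriv (deriv σ) s = (l s + deriv (deriv l) s) • u) ∧
    (∀ s, lorentz (σ s + deriv (deriv σ) s) (σ s + deriv (deriv σ) s) = 0) := by
  subst hσdef
  have hld : Differentiable ℝ l := hl.differentiable (by simp)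
  have hl'd : Differentiable ℝ (deriv l) :=
    (contDiff_infty_iff_deriv.mp (hl.of_le (by simp))).2.differentiable (by norm_num)
  have h1 : ∀ s, HasDerivAt (fun s => l s • u + Real.cos s • v + Real.sin s • w)
      (deriv l s • u + (-Real.sin s) • v + Real.cos s • w) s := by
    intro s
    exact (((hld s).hasDerivAt.smul_const u).add
      ((Real.hasDerivAt_cos s).smul_const v)).add
      ((Real.hasDerivAt_sin s).smul_const w)
  have hd1 : deriv (fun s => l s • u + Real.cos s • v + Real.sin s • w) =
      fun s => deriv l s • u + (-Real.sin s) • v + Real.cos s • w :=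
    funext fun s => (h1 s).deriv
  have h2 : ∀ s, HasDerivAt (fun s => deriv l s • u + (-Real.sin s) • v + Real.cos s • w)
      (deriv (deriv l) s • u + (-Real.cos s) • v + (-Real.sin s) • w) s := by
    intro s
    exact (((hl'd s).hasDerivAt.smul_const u).add
      (((Real.hasDerivAt_sin s).neg).smul_const v)).add
      ((Real.hasDerivAt_cos s).smul_const w)
  have hd2 : deriv (deriv (fun s => l s • u + Real.cos s • v + Real.sin s • w)) =
      fun s => deriv (deriv l) s • u + (-Real.cos s) • v + (-Real.sin s) • w := by
    rw [hd1]; exact funext fun s => (h2 s).deriv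
  have hkey : ∀ s, (fun s => l s • u + Real.cos s • v + Real.sin s • w) s +
      deriv (deriv (fun s => l s • u + Real.cos s • v + Real.sin s • w)) s =
      (l s + deriv (deriv l) s) • u := by
    intro s
    rw [hd2]
    simp only
    funext i
    simp only [Pi.add_apply, Pi.smul_apply, smul_eq_mul]
    ring
  refine ⟨?_, ?_, ?_, hkey, ?_⟩
  · intro s
    simp [hlper s, Real.cos_add_two_pi, Real.sin_add_two_pi]
  · intro s
    simp only
    rw [lor_expand, hu, hv, hw, huv, huw, hvw]
    have := Real.sin_sq_add_cos_sq s
    ring_nf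
    nlinarith [Real.sin_sq_add_cos_sq s]
  · intro s
    rw [hd1, lor_expand, hu, hv, hw, huv, huw, hvw]
    nlinarith [Real.sin_sq_add_cos_sq s]
  · intro s
    rw [hkey s, lor_smul_self, hu]
    ring
end

section
/- Let x, e₁, e₂ ∈ ℝ⁵ with 0 < ⟨x,x⟩ < 1 (x space-like), ⟨e₁,e₁⟩ = ⟨e₂,e₂⟩ = 1, and ⟨e₁,e₂⟩ = ⟨x,e₁⟩ = ⟨x,e₂⟩ = 0. Define σ(t) = x + √(1 − ⟨x,x⟩)((cos t)e₁ + (sin t)e₂) for t ∈ [0,2π] (one family of spheres of a Dupin cyclide with two singular points). Then ⟨σ(t),σ(t)⟩ = 1 for all t, ⟨σ'(t),σ'(t)⟩ = 1 − ⟨x,x⟩ ∈ (0,1), and the Lorentz length ∫₀^{2π} √(⟨σ'(t),σ'(t)⟩) dt = 2π√(1 − ⟨x,x⟩) < 2π. (Hence there is no universal lower bound on the length of closed space-like curves in Λ⁴ without a curvature hypothesis.) -/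
/-- A family of spheres of a Dupin cyclide with two singular points: the
intersection of Λ⁴ with a space-like affine plane through a space-like point `x`
with `0 < ⟨x,x⟩ < 1` is a space-like curve of Lorentz length
`2π√(1 − ⟨x,x⟩) < 2π`; hence there is no universal lower bound on the length of
closed space-like curves in Λ⁴ without a curvature hypothesis. -/
theorem singular_dupin_cyclide_family_length
    (x e₁ e₂ : Fin 5 → ℝ)
    (hx0 : 0 < lorentz x x) (hx1 : lorentz x x < 1)
    (he₁ : lorentz e₁ e₁ = 1) (he₂ : lorentz e₂ e₂ = 1)
    (he₁₂ : lorentz e₁ e₂ = 0) (hxe₁ : lorentz x e₁ = 0) (hxe₂ : lorentz x e₂ = 0)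
    (σ : ℝ → Fin 5 → ℝ)
    (hσdef : σ = fun t =>
      x + Real.sqrt (1 - lorentz x x) • (Real.cos t • e₁ + Real.sin t • e₂)) :
    (∀ t, lorentz (σ t) (σ t) = 1) ∧
    (∀ t, lorentz (deriv σ t) (deriv σ t) = 1 - lorentz x x) ∧
    0 < 1 - lorentz x x ∧ 1 - lorentz x x < 1 ∧
    (∫ t in (0:ℝ)..(2 * Real.pi), Real.sqrt (lorentz (deriv σ t) (deriv σ t)))
      = 2 * Real.pi * Real.sqrt (1 - lorentz x x) ∧
    2 * Real.pi * Real.sqrt (1 - lorentz x x) < 2 * Real.pi := by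
  set c := Real.sqrt (1 - lorentz x x) with hc
  have h1X : (0:ℝ) < 1 - lorentz x x := by linarith
  have hc2 : c ^ 2 = 1 - lorentz x x := Real.sq_sqrt h1X.le
  -- derivative
  have hσ' : ∀ t, HasDerivAt σ (c • ((-Real.sin t) • e₁ + Real.cos t • e₂)) t := by
    intro t
    rw [hσdef]
    have h1 : HasDerivAt (fun t => Real.cos t • e₁) ((-Real.sin t) • e₁) t :=
      (Real.hasDerivAt_cos t).smul_const e₁
    have h2 : HasDerivAt (fun t => Real.sin t • e₂) (Real.cos t • e₂) t :=
      (Real.hasDerivAt_sin t).smul_const e₂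
    exact ((h1.add h2).const_smul c).const_add x
  have hderiv : ∀ t, deriv σ t = c • ((-Real.sin t) • e₁ + Real.cos t • e₂) :=
    fun t => (hσ' t).deriv
  have key2 : ∀ t, lorentz (deriv σ t) (deriv σ t) = 1 - lorentz x x := by
    intro t
    rw [hderiv t]
    have hs := Real.sin_sq_add_cos_sq t
    simp only [lorentz, Pi.add_apply, Pi.smul_apply, smul_eq_mul] at *
    linear_combination (c^2 * Real.sin t^2) * he₁ + (-2*c^2*Real.sin t*Real.cos t) * he₁₂ +
      (c^2 * Real.cos t^2) * he₂ + (Real.sin t^2 + Real.cos t^2) * hc2 +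
      (1 - (x 0 * x 0 + x 1 * x 1 + x 2 * x 2 + x 3 * x 3 - x 4 * x 4)) * hs
  have key1 : ∀ t, lorentz (σ t) (σ t) = 1 := by
    intro t
    rw [hσdef]
    have hs := Real.sin_sq_add_cos_sq t
    simp only [lorentz, Pi.add_apply, Pi.smul_apply, smul_eq_mul] at *
    linear_combination (2*c*Real.cos t) * hxe₁ + (2*c*Real.sin t) * hxe₂ +
      (c^2 * Real.cos t^2) * he₁ + (2*c^2*Real.cos t*Real.sin t) * he₁₂ +
      (c^2 * Real.sin t^2) * he₂ + (Real.sin t^2 + Real.cos t^2) * hc2 +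
      (1 - (x 0 * x 0 + x 1 * x 1 + x 2 * x 2 + x 3 * x 3 - x 4 * x 4)) * hs
  have hclt : c < 1 := by
    have := Real.sqrt_lt_sqrt h1X.le (show 1 - lorentz x x < 1 by linarith)
    simpa [hc] using this
  refine ⟨key1, key2, h1X, by linarith, ?_, ?_⟩
  · have : (fun t => Real.sqrt (lorentz (deriv σ t) (deriv σ t))) = fun _ => c := by
      funext t; rw [key2 t, hc]
    rw [this, intervalIntegral.integral_const]
    simp [mul_comm]
  · have h2π := Real.two_pi_pos
    nlinarith
end

section
/- Let r : I → (0,π) be smooth with r'(t)² < 1 for all t, let m̂(t) = (cos t, sin t, 0, 0) ∈ ℝ⁴ (a unit-speed geodesic circle of S³), and define σ̂(t) = (1/sin r(t))·(cos t, sin t, 0, 0, cos r(t)) ∈ ℝ⁵. Then σ̂ is a space-like path in Λ⁴ with ⟨σ̂'(t),σ̂'(t)⟩ = (1 − r'(t)²)/sin²r(t) > 0, and its geodesic curvature vector k̂_g(t) = σ̂(t) + (σ̂''(t) − (⟨σ̂''(t),σ̂'(t)⟩/⟨σ̂'(t),σ̂'(t)⟩)σ̂'(t))/⟨σ̂'(t),σ̂'(t)⟩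 satisfies ⟨k̂_g(t), k̂_g(t)⟩ = −a(t)²/(1 − r'(t)²)³, where a(t) = (1 − r'(t)²)cos r(t) − r''(t) sin r(t). In particular ⟨k̂_g(t),k̂_g(t)⟩ < 0 whenever a(t) ≠ 0. -/
noncomputable def vAux (r : ℝ → ℝ) : ℝ → Fin 5 → ℝ := fun t =>
  ![(-Real.sin t * Real.sin (r t) - Real.cos t * Real.cos (r t) * deriv r t) / (Real.sin (r t))^2,
    (Real.cos t * Real.sin (r t) - Real.sin t * Real.cos (r t) * deriv r t) / (Real.sin (r t))^2,
    0, 0,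
    -(deriv r t) / (Real.sin (r t))^2]

noncomputable def wAux (r : ℝ → ℝ) : ℝ → Fin 5 → ℝ := fun t =>
  ![(2*Real.sin t*Real.sin (r t)*Real.cos (r t)*deriv r t
      + 2*Real.cos t*(Real.cos (r t))^2*(deriv r t)^2
      - Real.cos t*Real.sin (r t)*Real.cos (r t)*deriv (deriv r) t
      - Real.cos t*(Real.sin (r t))^2
      + Real.cos t*(Real.sin (r t))^2*(deriv r t)^2) / (Real.sin (r t))^3,
    (2*Real.sin t*(Real.cos (r t))^2*(deriv r t)^2
      - Real.sin t*Real.sin (r t)*Real.cos (r t)*deriv (deriv r) t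
      - Real.sin t*(Real.sin (r t))^2
      + Real.sin t*(Real.sin (r t))^2*(deriv r t)^2
      - 2*Real.cos t*Real.sin (r t)*Real.cos (r t)*deriv r t) / (Real.sin (r t))^3,
    0, 0,
    (2*(Real.cos (r t))^3*(deriv r t)^2
      - Real.sin (r t)*(Real.cos (r t))^2*deriv (deriv r) t
      + 2*(Real.sin (r t))^2*Real.cos (r t)*(deriv r t)^2
      - (Real.sin (r t))^3*deriv (deriv r) t) / (Real.sin (r t))^3]

lemma hasDerivAt_sigmaAux (r : ℝ → ℝ) (hr : ContDiff ℝ (⊤ : ℕ∞) r)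
    (hs : ∀ t, Real.sin (r t) ≠ 0) (t : ℝ) :
    HasDerivAt (fun t => (Real.sin (r t))⁻¹ •
      ![Real.cos t, Real.sin t, 0, 0, Real.cos (r t)]) (vAux r t) t := by
  have hrt : HasDerivAt r (deriv r t) t :=
    ((hr.differentiable (by simp)) t).hasDerivAt
  have hsin : HasDerivAt (fun u => Real.sin (r u)) (Real.cos (r t) * deriv r t) t :=
    (Real.hasDerivAt_sin (r t)).comp t hrt
  have hcos : HasDerivAt (fun u => Real.cos (r u)) (-Real.sin (r t) * deriv r t) t :=
    (Real.hasDerivAt_cos (r t)).comp t hrt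
  have hinv : HasDerivAt (fun u => (Real.sin (r u))⁻¹)
      (-(Real.cos (r t) * deriv r t) / (Real.sin (r t))^2) t := hsin.inv (hs t)
  rw [hasDerivAt_pi]
  intro i
  fin_cases i <;>
    simp only [Pi.smul_apply, smul_eq_mul, Matrix.cons_val_zero, Matrix.cons_val_one,
      Matrix.head_cons, Matrix.cons_val_two, Matrix.tail_cons, Matrix.cons_val_three,
      Matrix.cons_val_four, vAux, Fin.isValue, Fin.reduceFinMk]
  · have h := hinv.mul (Real.hasDerivAt_cos t)
    refine h.congr_deriv (Eq.symm ?_)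
    field_simp [hs t]
    ring
  · have h := hinv.mul (Real.hasDerivAt_sin t)
    refine h.congr_deriv (Eq.symm ?_)
    field_simp [hs t]
    ring
  · simpa using hasDerivAt_const t (0:ℝ)
  · simpa using hasDerivAt_const t (0:ℝ)
  · have h := hinv.mul hcos
    refine h.congr_deriv (Eq.symm ?_)
    have hsc : (Real.sin (r t))^2 + (Real.cos (r t))^2 = 1 := Real.sin_sq_add_cos_sq _
    field_simp [hs t]
    linear_combination (deriv r t) * hsc

lemma hasDerivAt_vAux (r : ℝ → ℝ) (hr : ContDiff ℝ (⊤ : ℕ∞) r)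
    (hs : ∀ t, Real.sin (r t) ≠ 0) (t : ℝ) :
    HasDerivAt (vAux r) (wAux r t) t := by
  have hrt : HasDerivAt r (deriv r t) t :=
    ((hr.differentiable (by simp)) t).hasDerivAt
  have hr2t : HasDerivAt (deriv r) (deriv (deriv r) t) t :=
    (((contDiff_infty_iff_deriv.mp (hr.of_le (by simp))).2.differentiable (by simp)) t).hasDerivAt
  have hsin : HasDerivAt (fun u => Real.sin (r u)) (Real.cos (r t) * deriv r t) t :=
    (Real.hasDerivAt_sin (r t)).comp t hrt
  have hcos : HasDerivAt (fun u => Real.cos (r u)) (-Real.sin (r t) * deriv r t) t :=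
    (Real.hasDerivAt_cos (r t)).comp t hrt
  have hden : HasDerivAt (fun u => (Real.sin (r u))^2)
      ((2:ℕ) * (Real.sin (r t))^1 * (Real.cos (r t) * deriv r t)) t := hsin.pow 2
  have hden' : (Real.sin (r t))^2 ≠ 0 := pow_ne_zero 2 (hs t)
  have hsc : (Real.sin (r t))^2 + (Real.cos (r t))^2 = 1 := Real.sin_sq_add_cos_sq _
  unfold vAux wAux
  rw [hasDerivAt_pi]
  intro i
  fin_cases i <;>
    simp only [Matrix.cons_val_zero, Matrix.cons_val_one, Matrix.head_cons, Fin.isValue,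
      Matrix.cons_val_two, Matrix.tail_cons, Matrix.cons_val_three, Matrix.cons_val_four, Fin.reduceFinMk]
  · have h := ((((Real.hasDerivAt_sin t).neg.mul hsin).sub
      (((Real.hasDerivAt_cos t).mul hcos).mul hr2t)).div hden hden')
    simp only [Pi.neg_apply, Pi.mul_apply, Pi.sub_apply] at h
    refine h.congr_deriv (Eq.symm ?_)
    field_simp [hs t]
    linear_combination (0 : ℝ) * hsc
  · have h := ((((Real.hasDerivAt_cos t).mul hsin).sub
      (((Real.hasDerivAt_sin t).mul hcos).mul hr2t)).div hden hden')
    simp only [Pi.neg_apply, Pi.mul_apply, Pi.sub_apply] at h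
    refine h.congr_deriv (Eq.symm ?_)
    field_simp [hs t]
    linear_combination (0 : ℝ) * hsc
  · simpa using hasDerivAt_const t (0:ℝ)
  · simpa using hasDerivAt_const t (0:ℝ)
  · have h := (hr2t.neg.div hden hden')
    simp only [Pi.neg_apply, Pi.mul_apply, Pi.sub_apply] at h
    refine h.congr_deriv (Eq.symm ?_)
    field_simp [hs t]
    linear_combination (2*Real.cos (r t)*(deriv r t)^2
      - Real.sin (r t)*deriv (deriv r) t) * hsc

lemma lorentz_expand (x v w : Fin 5 → ℝ) (α β : ℝ) :
    lorentz (x + α • (w - β • v)) (x + α • (w - β • v)) =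
      lorentz x x + 2*α*(lorentz x w) - 2*α*β*(lorentz x v)
      + α^2*(lorentz w w) - 2*α^2*β*(lorentz w v) + α^2*β^2*(lorentz v v) := by
  simp only [lorentz, Pi.add_apply, Pi.smul_apply, Pi.sub_apply, smul_eq_mul]
  ring

set_option maxHeartbeats 1600000 in
/-- The path of spheres centered on a unit-speed geodesic circle of S³ with radii
`r(t)` is space-like with `⟨σ̂',σ̂'⟩ = (1 − r'²)/sin²r`, and its geodesic
curvature vector satisfies `⟨k̂_g,k̂_g⟩ = −a²/(1 − r'²)³` where
`a = (1 − r'²)cos r − r'' sin r`; in particular it is time-like whenever `a ≠ 0`. -/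
theorem geodesic_circle_canal_curvature
    (r : ℝ → ℝ) (hr : ContDiff ℝ (⊤ : ℕ∞) r)
    (hr_range : ∀ t, 0 < r t ∧ r t < Real.pi)
    (hr' : ∀ t, (deriv r t) ^ 2 < 1)
    (σ : ℝ → Fin 5 → ℝ)
    (hσdef : σ = fun t => (Real.sin (r t))⁻¹ •
      ![Real.cos t, Real.sin t, 0, 0, Real.cos (r t)])
    (kg : ℝ → Fin 5 → ℝ)
    (hkgdef : ∀ t, kg t = σ t +
      (lorentz (deriv σ t) (deriv σ t))⁻¹ •
        (deriv (deriv σ) t -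
          (lorentz (deriv (deriv σ) t) (deriv σ t) /
            lorentz (deriv σ t) (deriv σ t)) • deriv σ t))
    (a : ℝ → ℝ)
    (hadef : ∀ t, a t = (1 - (deriv r t) ^ 2) * Real.cos (r t)
      - deriv (deriv r) t * Real.sin (r t)) :
    (∀ t, lorentz (σ t) (σ t) = 1) ∧
    (∀ t, lorentz (deriv σ t) (deriv σ t)
      = (1 - (deriv r t) ^ 2) / (Real.sin (r t)) ^ 2) ∧
    (∀ t, 0 < lorentz (deriv σ t) (deriv σ t)) ∧
    (∀ t, lorentz (kg t) (kg t) = -(a t) ^ 2 / (1 - (deriv r t) ^ 2) ^ 3) ∧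
    (∀ t, a t ≠ 0 → lorentz (kg t) (kg t) < 0) := by
  have hspos : ∀ t, 0 < Real.sin (r t) := fun t =>
    Real.sin_pos_of_pos_of_lt_pi (hr_range t).1 (hr_range t).2
  have hs : ∀ t, Real.sin (r t) ≠ 0 := fun t => ne_of_gt (hspos t)
  have hv : deriv σ = vAux r := by
    funext t
    rw [hσdef]
    exact (hasDerivAt_sigmaAux r hr hs t).deriv
  have hw : deriv (deriv σ) = wAux r := by
    rw [hv]
    funext t
    exact (hasDerivAt_vAux r hr hs t).deriv
  have hA : ∀ t : ℝ, (Real.sin t)^2 + (Real.cos t)^2 = 1 := fun t => Real.sin_sq_add_cos_sq t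
  have hu : ∀ t, (0:ℝ) < 1 - (deriv r t)^2 := fun t => by nlinarith [hr' t]
  have h1 : ∀ t, lorentz (σ t) (σ t) = 1 := by
    intro t
    rw [hσdef]
    simp only [lorentz, Pi.smul_apply, smul_eq_mul, Matrix.cons_val_zero, Matrix.cons_val_one,
      Matrix.head_cons, Matrix.cons_val_two, Matrix.tail_cons, Matrix.cons_val_three,
      Matrix.cons_val_four]
    field_simp [hs t]
    linear_combination (1) * hA t + (-1) * hA (r t)
  have h2 : ∀ t, lorentz (vAux r t) (vAux r t) = (1 - (deriv r t) ^ 2) / (Real.sin (r t)) ^ 2 := by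
    intro t
    simp only [lorentz, vAux, Matrix.cons_val_zero, Matrix.cons_val_one,
      Matrix.head_cons, Matrix.cons_val_two, Matrix.tail_cons, Matrix.cons_val_three,
      Matrix.cons_val_four]
    field_simp [hs t]
    linear_combination (Real.sin (r t)^2 + Real.cos (r t)^2*deriv r t^2) * hA t + (deriv r t^2) * hA (r t)
  have hLσv : ∀ t, lorentz (σ t) (vAux r t) = 0 := by
    intro t
    rw [hσdef]
    simp only [lorentz, vAux, Pi.smul_apply, smul_eq_mul, Matrix.cons_val_zero, Matrix.cons_val_one,
      Matrix.head_cons, Matrix.cons_val_two, Matrix.tail_cons, Matrix.cons_val_three,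
      Matrix.cons_val_four]
    field_simp [hs t]
    linear_combination (-1*Real.cos (r t)*(deriv r t)) * hA t + (0) * hA (r t)
  have hLσw : ∀ t, lorentz (σ t) (wAux r t) = -((1 - (deriv r t)^2) / (Real.sin (r t))^2) := by
    intro t
    rw [hσdef]
    simp only [lorentz, wAux, Pi.smul_apply, smul_eq_mul, Matrix.cons_val_zero, Matrix.cons_val_one,
      Matrix.head_cons, Matrix.cons_val_two, Matrix.tail_cons, Matrix.cons_val_three,
      Matrix.cons_val_four]
    field_simp [hs t]
    linear_combination (2*Real.cos (r t)^2*deriv r t^2 - Real.sin (r t)*Real.cos (r t)*deriv (deriv r) t - Real.sin (r t)^2 + Real.sin (r t)^2*deriv r t^2) * hA t + (Real.sin (r t)*Real.cos (r t)*deriv (deriv r) t - 2*Real.cos (r t)^2*deriv r t^2) * hA (r t)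
  have hLwv : ∀ t, lorentz (wAux r t) (vAux r t) =
      (-(Real.cos (r t)) * deriv r t + Real.cos (r t) * (deriv r t)^3
        - Real.sin (r t) * deriv r t * deriv (deriv r) t) / (Real.sin (r t))^3 := by
    intro t
    simp only [lorentz, vAux, wAux, Matrix.cons_val_zero, Matrix.cons_val_one,
      Matrix.head_cons, Matrix.cons_val_two, Matrix.tail_cons, Matrix.cons_val_three,
      Matrix.cons_val_four]
    field_simp [hs t]
    linear_combination (-(2*deriv r t*Real.cos (r t)*Real.sin (r t)^2 + Real.cos (r t)*deriv r t*(2*Real.cos (r t)^2*deriv r t^2 - Real.sin (r t)*Real.cos (r t)*deriv (deriv r) t - Real.sin (r t)^2 + Real.sin (r t)^2*deriv r t^2))) * hA t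
  have hLww : ∀ t, lorentz (wAux r t) (wAux r t) =
      (2*Real.cos (r t)*deriv (deriv r) t + 2*Real.cos (r t)*(deriv r t)^2*deriv (deriv r) t
        + Real.sin (r t) - Real.sin (r t)*(deriv (deriv r) t)^2
        - 2*Real.sin (r t)*(deriv r t)^2 + Real.sin (r t)*(deriv r t)^4) / (Real.sin (r t))^3 := by
    intro t
    simp only [lorentz, vAux, wAux, Matrix.cons_val_zero, Matrix.cons_val_one,
      Matrix.head_cons, Matrix.cons_val_two, Matrix.tail_cons, Matrix.cons_val_three,
      Matrix.cons_val_four]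
    field_simp [hs t]
    linear_combination (4*deriv r t^2*Real.cos (r t)^2*Real.sin (r t)^2 + (2*Real.cos (r t)^2*deriv r t^2 - Real.sin (r t)*Real.cos (r t)*deriv (deriv r) t - Real.sin (r t)^2 + Real.sin (r t)^2*deriv r t^2)^2) * hA t + (-(Real.sin (r t)^2 + Real.cos (r t)^2) * (2*Real.cos (r t)*deriv r t^2 - Real.sin (r t)*deriv (deriv r) t)^2) * hA (r t)
  have h4 : ∀ t, lorentz (kg t) (kg t) = -(a t) ^ 2 / (1 - (deriv r t) ^ 2) ^ 3 := by
    intro t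
    rw [hkgdef t, hw, hv, lorentz_expand, h1 t, h2 t, hLσv t, hLσw t, hLwv t, hLww t, hadef t]
    have hsc := hA (r t)
    have hst := hs t
    have hut := ne_of_gt (hu t)
    set s := Real.sin (r t) with hsdef
    set c := Real.cos (r t) with hcdef
    set r1 := deriv r t with hr1def
    set r2 := deriv (deriv r) t with hr2def
    field_simp
    linear_combination ((1 - r1^2)^3) * hsc
  refine ⟨h1, fun t => by rw [hv]; exact h2 t, fun t => by
      rw [hv, h2 t]; exact div_pos (hu t) (pow_pos (hspos t) 2), h4, fun t ha => by
      rw [h4 t]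
      have ha2 : 0 < a t ^ 2 := by positivity
      exact div_neg_of_neg_of_pos (neg_lt_zero.mpr ha2) (pow_pos (hu t) 3)⟩
end
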